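/- arXiv:2011.05875 — 2 statements merged into one kernel-verified Lean document; each statement's English description precedes it below -/
import Mathlib

section
/- A pair of sequences ((Aₙ),(Ψₙ)) of bounded linear operators from H to H₀ is a factorable weak operator-valued frame in B(H,H₀) if and only if the maps U : ℓ²(ℕ,H₀) → H, y ↦ Σ_{n=1}^∞ Aₙ* Lₙ* y, and V : ℓ²(ℕ,H₀) → H, z ↦ Σ_{n=1}^∞ Ψₙ* Lₙ* z, are well-defined bounded linear operators such that V U* is bounded invertible on H. -/
noncomputable section

open ContinuousLinearMap Filter

open scoped InnerProductSpace

variable {H H₀ : Type*} [NormedAddCommGroup H] [InnerProductSpace ℂ H] [CompleteSpace H]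
  [NormedAddCommGroup H₀] [InnerProductSpace ℂ H₀] [CompleteSpace H₀]

/-- `ℓ²(I, H₀)`: square-summable `H₀`-valued families indexed by `I`. -/
abbrev l2 (I : Type*) (H₀ : Type*) [NormedAddCommGroup H₀] : Type _ :=
  lp (fun _ : I => H₀) 2

/-- The isometry `Lᵢ : H₀ → ℓ²(I,H₀)` sending `h` to the family equal to `h` at index `i`
and `0` elsewhere. -/
def Lop {I : Type*} [DecidableEq I] (i : I) : H₀ →L[ℂ] l2 I H₀ :=
  LinearMap.mkContinuous
    { toFun := fun h => lp.single 2 i h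
      map_add' := by
        intro a b
        apply lp.ext
        funext j
        by_cases hj : j = i
        · subst hj; simp [lp.single_apply_self]
        · simp [lp.single_apply_ne _ _ _ hj, lp.coeFn_add]
      map_smul' := by
        intro c a
        simp [lp.single_smul] }
    1
    (by
      intro h
      simpa using (lp.norm_single (p := 2) (by norm_num) (fun _ : I => h) i).le)

/-- Convergence of the sequence of partial sums `∑_{n < m} f n` to `x` as `m → ∞`. -/
def SeqSum {E : Type*} [AddCommMonoid E] [TopologicalSpace E] (f : ℕ → E) (x : E) : Prop :=
  Tendsto (fun m => ∑ n ∈ Finset.range m, f n) atTop (nhds x)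

lemma Lop_apply {I : Type*} [DecidableEq I] (i : I) (x : H₀) :
    Lop i x = lp.single 2 i x := rfl

lemma Lop_coord {I : Type*} [DecidableEq I] (i j : I) (x : H₀) :
    (Lop i x : ∀ _ : I, H₀) j = if j = i then x else 0 := by
  by_cases h : j = i
  · subst h; simp [Lop_apply, lp.single_apply_self]
  · simp [Lop_apply, lp.single_apply_ne _ _ _ h, h]

lemma adjoint_Lop {I : Type*} [DecidableEq I] (i : I) (y : l2 I H₀) :
    adjoint (Lop i) y = y i := by
  apply ext_inner_right ℂ
  intro x
  rw [adjoint_inner_left]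
  exact lp.inner_single_right (𝕜 := ℂ) i x y

lemma SeqSum.unique {E : Type*} [AddCommMonoid E] [TopologicalSpace E] [T2Space E]
    {f : ℕ → E} {x y : E} (hx : SeqSum f x) (hy : SeqSum f y) : x = y :=
  tendsto_nhds_unique hx hy

lemma SeqSum.map {E F : Type*} [NormedAddCommGroup E] [NormedSpace ℂ E]
    [NormedAddCommGroup F] [NormedSpace ℂ F] {f : ℕ → E} {x : E}
    (h : SeqSum f x) (T : E →L[ℂ] F) : SeqSum (fun n => T (f n)) (T x) := by
  unfold SeqSum at h ⊢
  refine ((T.continuous.tendsto x).comp h).congr fun m => ?_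
  simp [Function.comp, map_sum]

lemma seqSum_ite {E : Type*} [AddCommMonoid E] [TopologicalSpace E] (n : ℕ) (c : E) :
    SeqSum (fun k => if k = n then c else 0) c := by
  unfold SeqSum
  refine Tendsto.congr' ?_ tendsto_const_nhds
  filter_upwards [eventually_gt_atTop n] with m hm
  rw [Finset.sum_ite_eq' (Finset.range m) n (fun _ => c)]
  simp [Finset.mem_range.mpr hm]

lemma seqSum_single (y : l2 ℕ H₀) : SeqSum (fun n => Lop n (y n)) y := by
  have := (lp.hasSum_single (E := fun _ : ℕ => H₀) ENNReal.ofNat_ne_top y).tendsto_sum_nat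
  exact this

set_option maxHeartbeats 1000000 in
/-- `((Aₙ),(Ψₙ))` is a factorable weak OVF iff the synthesis-type maps
`U : y ↦ Σ Aₙ* Lₙ* y` and `V : z ↦ Σ Ψₙ* Lₙ* z` are well-defined bounded operators with
`V U*` bounded invertible. -/
theorem stmt10 (A Ψ : ℕ → H →L[ℂ] H₀) :
    (∃ (θA θΨ : H →L[ℂ] l2 ℕ H₀) (S : H →L[ℂ] H),
        (∀ h : H, SeqSum (fun n => Lop n (A n h)) (θA h)) ∧
        (∀ h : H, SeqSum (fun n => Lop n (Ψ n h)) (θΨ h)) ∧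
        (∀ h : H, SeqSum (fun n => adjoint (Ψ n) (A n h)) (S h)) ∧
        IsUnit S) ↔
    (∃ U V : l2 ℕ H₀ →L[ℂ] H,
        (∀ y : l2 ℕ H₀, SeqSum (fun n => adjoint (A n) (adjoint (Lop n) y)) (U y)) ∧
        (∀ z : l2 ℕ H₀, SeqSum (fun n => adjoint (Ψ n) (adjoint (Lop n) z)) (V z)) ∧
        IsUnit (V ∘L adjoint U)) := by
  constructor
  · rintro ⟨θA, θΨ, S, h1, h2, h3, hS⟩
    -- coordinates of θA h
    have coordA : ∀ (h : H) (n : ℕ), (θA h : ∀ _ : ℕ, H₀) n = A n h := by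
      intro h n
      have h5 := (h1 h).map (adjoint (Lop n))
      have h6 : (fun k => adjoint (Lop (H₀ := H₀) n) (Lop k (A k h)))
          = fun k => if k = n then A n h else 0 := by
        funext k
        rw [adjoint_Lop, Lop_coord]
        by_cases hk : n = k
        · subst hk; simp
        · simp [hk, Ne.symm hk]
      rw [h6, adjoint_Lop] at h5
      exact ((seqSum_ite n (A n h)).unique h5).symm
    have coordΨ : ∀ (h : H) (n : ℕ), (θΨ h : ∀ _ : ℕ, H₀) n = Ψ n h := by
      intro h n
      have h5 := (h2 h).map (adjoint (Lop n))
      have h6 : (fun k => adjoint (Lop (H₀ := H₀) n) (Lop k (Ψ k h)))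
          = fun k => if k = n then Ψ n h else 0 := by
        funext k
        rw [adjoint_Lop, Lop_coord]
        by_cases hk : n = k
        · subst hk; simp
        · simp [hk, Ne.symm hk]
      rw [h6, adjoint_Lop] at h5
      exact ((seqSum_ite n (Ψ n h)).unique h5).symm
    -- adjoint compositions
    have adjA : ∀ (n : ℕ) (x : H₀), adjoint θA (Lop n x) = adjoint (A n) x := by
      intro n x
      apply ext_inner_right ℂ
      intro h
      rw [adjoint_inner_left, adjoint_inner_left, Lop_apply, lp.inner_single_left, coordA]
    have adjΨ : ∀ (n : ℕ) (x : H₀), adjoint θΨ (Lop n x) = adjoint (Ψ n) x := by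
      intro n x
      apply ext_inner_right ℂ
      intro h
      rw [adjoint_inner_left, adjoint_inner_left, Lop_apply, lp.inner_single_left, coordΨ]
    refine ⟨adjoint θA, adjoint θΨ, ?_, ?_, ?_⟩
    · intro y
      have := (seqSum_single y).map (adjoint θA)
      have heq : (fun n => adjoint θA (Lop n (y n)))
          = fun n => adjoint (A n) (adjoint (Lop n) y) := by
        funext n; rw [adjoint_Lop, adjA]
      rwa [heq] at this
    · intro z
      have := (seqSum_single z).map (adjoint θΨ)
      have heq : (fun n => adjoint θΨ (Lop n (z n)))
          = fun n => adjoint (Ψ n) (adjoint (Lop n) z) := by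
        funext n; rw [adjoint_Lop, adjΨ]
      rwa [heq] at this
    · have hcomp : adjoint θΨ ∘L adjoint (adjoint θA) = S := by
        ext h
        rw [adjoint_adjoint]
        have h5 := (h1 h).map (adjoint θΨ)
        have heq : (fun n => adjoint θΨ (Lop n (A n h)))
            = fun n => adjoint (Ψ n) (A n h) := by
          funext n; rw [adjΨ]
        rw [heq] at h5
        exact h5.unique (h3 h)
      rw [hcomp]; exact hS
  · rintro ⟨U, V, hU, hV, hVU⟩
    -- U and V on single vectors
    have Usingle : ∀ (n : ℕ) (x : H₀), U (Lop n x) = adjoint (A n) x := by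
      intro n x
      have h5 := hU (Lop n x)
      have h6 : (fun k => adjoint (A k) (adjoint (Lop k) (Lop n x)))
          = fun k => if k = n then adjoint (A n) x else 0 := by
        funext k
        rw [adjoint_Lop, Lop_coord]
        by_cases hk : k = n
        · subst hk; simp
        · simp [hk]
      rw [h6] at h5
      exact ((seqSum_ite n (adjoint (A n) x)).unique h5).symm
    have Vsingle : ∀ (n : ℕ) (x : H₀), V (Lop n x) = adjoint (Ψ n) x := by
      intro n x
      have h5 := hV (Lop n x)
      have h6 : (fun k => adjoint (Ψ k) (adjoint (Lop k) (Lop n x)))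
          = fun k => if k = n then adjoint (Ψ n) x else 0 := by
        funext k
        rw [adjoint_Lop, Lop_coord]
        by_cases hk : k = n
        · subst hk; simp
        · simp [hk]
      rw [h6] at h5
      exact ((seqSum_ite n (adjoint (Ψ n) x)).unique h5).symm
    -- coordinates of adjoint U / adjoint V
    have coordU : ∀ (h : H) (n : ℕ), (adjoint U h : ∀ _ : ℕ, H₀) n = A n h := by
      intro h n
      apply ext_inner_left ℂ
      intro x
      have : ⟪x, (adjoint U h : ∀ _ : ℕ, H₀) n⟫_ℂ = ⟪Lop n x, adjoint U h⟫_ℂ :=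
        (lp.inner_single_left n x (adjoint U h)).symm
      rw [this, adjoint_inner_right, Usingle, adjoint_inner_left]
    have coordV : ∀ (h : H) (n : ℕ), (adjoint V h : ∀ _ : ℕ, H₀) n = Ψ n h := by
      intro h n
      apply ext_inner_left ℂ
      intro x
      have : ⟪x, (adjoint V h : ∀ _ : ℕ, H₀) n⟫_ℂ = ⟪Lop n x, adjoint V h⟫_ℂ :=
        (lp.inner_single_left n x (adjoint V h)).symm
      rw [this, adjoint_inner_right, Vsingle, adjoint_inner_left]
    have θAseq : ∀ h : H, SeqSum (fun n => Lop n (A n h)) (adjoint U h) := by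
      intro h
      have := seqSum_single (adjoint U h)
      have heq : (fun n => Lop n ((adjoint U h : ∀ _ : ℕ, H₀) n))
          = fun n => Lop n (A n h) := by
        funext n; rw [coordU]
      rwa [heq] at this
    have θΨseq : ∀ h : H, SeqSum (fun n => Lop n (Ψ n h)) (adjoint V h) := by
      intro h
      have := seqSum_single (adjoint V h)
      have heq : (fun n => Lop n ((adjoint V h : ∀ _ : ℕ, H₀) n))
          = fun n => Lop n (Ψ n h) := by
        funext n; rw [coordV]
      rwa [heq] at this
    refine ⟨adjoint U, adjoint V, V ∘L adjoint U, θAseq, θΨseq, ?_, hVU⟩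
    intro h
    have h5 := (θAseq h).map V
    have heq : (fun n => V (Lop n (A n h))) = fun n => adjoint (Ψ n) (A n h) := by
      funext n; rw [Vsingle]
    rw [heq] at h5
    exact h5
end
end

section
/- Let ((Aₙ),(Ψₙ)) be a factorable weak operator-valued frame in B(H,H₀) with frame operator S := S_{A,Ψ}. A factorable weak OVF ((Bₙ),(Φₙ)) in B(H,H₀) is a dual of ((Aₙ),(Ψₙ)) if and only if there exist bounded linear operators U : H → ℓ²(ℕ,H₀) and V : ℓ²(ℕ,H₀) → H such that Bₙ = Aₙ S⁻¹ + Lₙ* U − Aₙ S⁻¹ θ_Ψ* U and Φₙ = Ψₙ (S⁻¹)* + Lₙ* V* − Ψₙ (S⁻¹)* θ_A* V* for all n ∈ ℕ, and the operator S⁻¹ + V U − V θ_A S⁻¹ θ_Ψ* U is bounded invertible on H. -/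
noncomputable section

open ContinuousLinearMap Filter

variable {H H₀ : Type*} [NormedAddCommGroup H] [InnerProductSpace ℂ H] [CompleteSpace H]
  [NormedAddCommGroup H₀] [InnerProductSpace ℂ H₀] [CompleteSpace H₀]

lemma Lop_apply_s11 (n : ℕ) (h : H₀) : (Lop n h : l2 ℕ H₀) = lp.single 2 n h := rfl

lemma adjoint_Lop_apply (n : ℕ) (f : l2 ℕ H₀) : adjoint (Lop (H₀ := H₀) n) f = f n := by
  apply ext_inner_right ℂ
  intro g
  rw [adjoint_inner_left]
  exact lp.inner_single_right (𝕜 := ℂ) (G := fun _ : ℕ => H₀) n g f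

lemma coord_eq {C : ℕ → H →L[ℂ] H₀} {θC : H →L[ℂ] l2 ℕ H₀}
    (hθC : ∀ h : H, SeqSum (fun n => Lop n (C n h)) (θC h)) (n : ℕ) (h : H) :
    (θC h : ∀ _ : ℕ, H₀) n = C n h := by
  have h1 : Tendsto (fun m => adjoint (Lop (H₀ := H₀) n)
      (∑ k ∈ Finset.range m, Lop k (C k h))) atTop (nhds (adjoint (Lop (H₀ := H₀) n) (θC h))) :=
    ((adjoint (Lop (H₀ := H₀) n)).continuous.tendsto _).comp (hθC h)
  have h2 : ∀ m, n < m → adjoint (Lop (H₀ := H₀) n)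
      (∑ k ∈ Finset.range m, Lop k (C k h)) = C n h := by
    intro m hm
    rw [map_sum]
    have e : ∀ k, adjoint (Lop (H₀ := H₀) n) (Lop k (C k h)) = if k = n then C k h else 0 := by
      intro k
      rw [adjoint_Lop_apply, Lop_apply_s11]
      by_cases hk : k = n
      · subst hk; simp [lp.single_apply_self]
      · rw [lp.single_apply_ne _ _ _ (Ne.symm hk), if_neg hk]
    simp only [e]
    rw [Finset.sum_ite_eq' (Finset.range m) n (fun k => C k h), if_pos (Finset.mem_range.2 hm)]
  have h3 : adjoint (Lop (H₀ := H₀) n) (θC h) = C n h :=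
    tendsto_nhds_unique (h1.congr' (((eventually_gt_atTop n).mono h2))) tendsto_const_nhds
  rw [← h3, adjoint_Lop_apply]

lemma coord_comp {C : ℕ → H →L[ℂ] H₀} {θC : H →L[ℂ] l2 ℕ H₀}
    (hθC : ∀ h : H, SeqSum (fun n => Lop n (C n h)) (θC h)) (n : ℕ) :
    adjoint (Lop (H₀ := H₀) n) ∘L θC = C n := by
  ext h
  simp [adjoint_Lop_apply, coord_eq hθC n h]

lemma adj_factor {C : ℕ → H →L[ℂ] H₀} {θC : H →L[ℂ] l2 ℕ H₀}
    (hθC : ∀ h : H, SeqSum (fun n => Lop n (C n h)) (θC h)) (n : ℕ) :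
    adjoint (C n) = adjoint θC ∘L Lop n := by
  rw [← coord_comp hθC n, adjoint_comp, adjoint_adjoint]

lemma seqsum_adj {C D : ℕ → H →L[ℂ] H₀} {θC θD : H →L[ℂ] l2 ℕ H₀}
    (hθC : ∀ h : H, SeqSum (fun n => Lop n (C n h)) (θC h))
    (hθD : ∀ h : H, SeqSum (fun n => Lop n (D n h)) (θD h)) (h : H) :
    SeqSum (fun n => adjoint (C n) (D n h)) ((adjoint θC ∘L θD) h) := by
  have h1 : Tendsto (fun m => adjoint θC (∑ k ∈ Finset.range m, Lop k (D k h))) atTop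
      (nhds (adjoint θC (θD h))) := ((adjoint θC).continuous.tendsto _).comp (hθD h)
  have h2 : (fun m => adjoint θC (∑ k ∈ Finset.range m, Lop k (D k h))) =
      fun m => ∑ k ∈ Finset.range m, adjoint (C k) (D k h) := by
    funext m
    rw [map_sum]
    exact Finset.sum_congr rfl fun k _ => by rw [adj_factor hθC k]; rfl
  rw [SeqSum, ← h2]
  exact h1

lemma theta_eq {C : ℕ → H →L[ℂ] H₀} {θC X : H →L[ℂ] l2 ℕ H₀}
    (hθC : ∀ h : H, SeqSum (fun n => Lop n (C n h)) (θC h))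
    (hX : ∀ n, C n = adjoint (Lop (H₀ := H₀) n) ∘L X) : θC = X := by
  ext h n
  rw [coord_eq hθC n h, hX n]
  simp [adjoint_Lop_apply]
set_option maxHeartbeats 1000000 in
/-- Characterization of all factorable weak OVF duals of a factorable weak OVF
`((Aₙ),(Ψₙ))` with frame operator `S` (inverse `T`). -/
theorem stmt11
    (A Ψ : ℕ → H →L[ℂ] H₀) (S T : H →L[ℂ] H)
    (hS : ∀ h : H, SeqSum (fun n => adjoint (Ψ n) (A n h)) (S h))
    (hST : S ∘L T = 1) (hTS : T ∘L S = 1)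
    (θA θΨ : H →L[ℂ] l2 ℕ H₀)
    (hθA : ∀ h : H, SeqSum (fun n => Lop n (A n h)) (θA h))
    (hθΨ : ∀ h : H, SeqSum (fun n => Lop n (Ψ n h)) (θΨ h))
    -- `((Bₙ),(Φₙ))` is a factorable weak OVF
    (B Φ : ℕ → H →L[ℂ] H₀) (SB : H →L[ℂ] H)
    (hSB : ∀ h : H, SeqSum (fun n => adjoint (Φ n) (B n h)) (SB h))
    (hSBu : IsUnit SB)
    (θB θΦ : H →L[ℂ] l2 ℕ H₀)
    (hθB : ∀ h : H, SeqSum (fun n => Lop n (B n h)) (θB h))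
    (hθΦ : ∀ h : H, SeqSum (fun n => Lop n (Φ n h)) (θΦ h)) :
    -- `((Bₙ),(Φₙ))` is a dual of `((Aₙ),(Ψₙ))` ...
    ((∀ h : H, SeqSum (fun n => adjoint (Ψ n) (B n h)) h) ∧
      (∀ h : H, SeqSum (fun n => adjoint (Φ n) (A n h)) h)) ↔
    -- ... iff it has the stated parametrized form
    (∃ (U : H →L[ℂ] l2 ℕ H₀) (V : l2 ℕ H₀ →L[ℂ] H),
      (∀ n : ℕ, B n =
        A n ∘L T + adjoint (Lop n) ∘L U - ((A n ∘L T) ∘L adjoint θΨ) ∘L U) ∧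
      (∀ n : ℕ, Φ n =
        Ψ n ∘L adjoint T + adjoint (Lop n) ∘L adjoint V -
          ((Ψ n ∘L adjoint T) ∘L adjoint θA) ∘L adjoint V) ∧
      IsUnit (T + V ∘L U - ((V ∘L θA) ∘L T) ∘L (adjoint θΨ ∘L U))) := by
  have hLA := coord_comp hθA
  have hLΨ := coord_comp hθΨ
  have hLB := coord_comp hθB
  have hLΦ := coord_comp hθΦ
  have aone : adjoint (1 : H →L[ℂ] H) = 1 := by
    rw [one_def, adjoint_id]
  have hSfact : adjoint θΨ ∘L θA = S := by
    ext h
    exact tendsto_nhds_unique (seqsum_adj hθΨ hθA h) (hS h)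
  have hSBfact : adjoint θΦ ∘L θB = SB := by
    ext h
    exact tendsto_nhds_unique (seqsum_adj hθΦ hθB h) (hSB h)
  have hadj1 : adjoint θA ∘L θΨ = adjoint S := by
    rw [← hSfact, adjoint_comp, adjoint_adjoint]
  have hadjTS : adjoint S ∘L adjoint T = 1 := by
    rw [← adjoint_comp, hTS, aone]
  constructor
  · rintro ⟨hd1, hd2⟩
    have h1 : adjoint θΨ ∘L θB = 1 := by
      ext h
      rw [ContinuousLinearMap.one_apply]
      exact tendsto_nhds_unique (seqsum_adj hθΨ hθB h) (hd1 h)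
    have h2 : adjoint θΦ ∘L θA = 1 := by
      ext h
      rw [ContinuousLinearMap.one_apply]
      exact tendsto_nhds_unique (seqsum_adj hθΦ hθA h) (hd2 h)
    have hUzero : adjoint θΨ ∘L (θB - θA ∘L T) = 0 := by
      rw [comp_sub, h1, ← comp_assoc, hSfact, hST, sub_self]
    have hadjV : adjoint (adjoint θΦ - T ∘L adjoint θΨ) = θΦ - θΨ ∘L adjoint T := by
      rw [map_sub, adjoint_adjoint, adjoint_comp, adjoint_adjoint]
    have h2' : adjoint θA ∘L θΦ = 1 := by
      have := congrArg adjoint h2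
      rwa [adjoint_comp, adjoint_adjoint, aone] at this
    have hVzero : adjoint θA ∘L (θΦ - θΨ ∘L adjoint T) = 0 := by
      rw [comp_sub, h2', ← comp_assoc, hadj1, hadjTS, sub_self]
    refine ⟨θB - θA ∘L T, adjoint θΦ - T ∘L adjoint θΨ, ?_, ?_, ?_⟩
    · intro n
      have key : ((A n ∘L T) ∘L adjoint θΨ) ∘L (θB - θA ∘L T) = 0 := by
        rw [comp_assoc, hUzero, comp_zero]
      rw [key, sub_zero, comp_sub, hLB n, ← comp_assoc, hLA n]
      abel
    · intro n
      rw [hadjV]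
      have key : ((Ψ n ∘L adjoint T) ∘L adjoint θA) ∘L (θΦ - θΨ ∘L adjoint T) = 0 := by
        rw [comp_assoc, hVzero, comp_zero]
      rw [key, sub_zero, comp_sub, hLΦ n, ← comp_assoc, hLΨ n]
      abel
    · have e2 : (adjoint θΦ - T ∘L adjoint θΨ) ∘L (θB - θA ∘L T) = SB - T := by
        have a2 : adjoint θΦ ∘L (θA ∘L T) = T := by
          rw [← comp_assoc, h2, one_def, id_comp]
        have a3 : (T ∘L adjoint θΨ) ∘L θB = T := by
          rw [comp_assoc, h1, one_def, comp_id]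
        have a4 : (T ∘L adjoint θΨ) ∘L (θA ∘L T) = T := by
          rw [comp_assoc, ← comp_assoc (adjoint θΨ) θA T, hSfact, hST, one_def, comp_id]
        rw [sub_comp, comp_sub, comp_sub, hSBfact, a2, a3, a4, sub_self, sub_zero]
      rw [hUzero, comp_zero, sub_zero, e2]
      have : T + (SB - T) = SB := by abel
      rw [this]
      exact hSBu
  · rintro ⟨U, V, hBf, hΦf, -⟩
    have hθBX : θB = θA ∘L T + U - ((θA ∘L T) ∘L adjoint θΨ) ∘L U := by
      apply theta_eq hθB
      intro n
      rw [hBf n]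
      simp only [comp_sub, comp_add, ← comp_assoc, hLA n]
    have hθΦY : θΦ = θΨ ∘L adjoint T + adjoint V -
        ((θΨ ∘L adjoint T) ∘L adjoint θA) ∘L adjoint V := by
      apply theta_eq hθΦ
      intro n
      rw [hΦf n]
      simp only [comp_sub, comp_add, ← comp_assoc, hLΨ n]
    have hd1op : adjoint θΨ ∘L θB = 1 := by
      rw [hθBX]
      simp only [comp_sub, comp_add, ← comp_assoc, hSfact, hST, one_def, id_comp,
        add_sub_cancel_right]
    have hd2op : adjoint θA ∘L θΦ = 1 := by
      rw [hθΦY]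
      simp only [comp_sub, comp_add, ← comp_assoc, hadj1, hadjTS, one_def, id_comp,
        add_sub_cancel_right]
    have aone : adjoint (1 : H →L[ℂ] H) = 1 := by rw [one_def, adjoint_id]
    have hd2op' : adjoint θΦ ∘L θA = 1 := by
      have := congrArg adjoint hd2op
      rwa [adjoint_comp, adjoint_adjoint, aone] at this
    constructor <;> intro h
    · have := seqsum_adj hθΨ hθB h
      rwa [hd1op, ContinuousLinearMap.one_apply] at this
    · have := seqsum_adj hθΦ hθA h
      rwa [hd2op', ContinuousLinearMap.one_apply] at this
end
end
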